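/- arXiv:1305.5492 — 2 statements merged into one kernel-verified Lean document; each statement's English description precedes it below -/
import Mathlib

section
/- Let n ≥ 1 be an integer. (a) For every integer ℓ ≥ 1, λ(nℓ)·log(nℓ) − λ(n)·λ(ℓ)·log(ℓ) = λ(nℓ)·log(n); in particular the absolute value of this quantity is at most log(n) for all ℓ, so the matrix entries of the twisted commutator D·μ_n − σ(μ_n)·D of the Bost–Connes σ-spectral triple are bounded. (b) If moreover λ(n) = −1, then for every C there exists an integer ℓ ≥ 1 with |λ(nℓ)·log(nℓ) − λ(ℓ)·log(ℓ)| > C; that is, the matrix entries of the ordinary commutator [D, μ_n] are unbounded in ℓ. -/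
open ArithmeticFunction Filter
open scoped ArithmeticFunction.Omega

/-! Since `Ω` is completely additive, `λ(nℓ) = λ(n) λ(ℓ)` and `log (nℓ) = log n + log ℓ`, so in
the twisted commutator the `log ℓ` terms cancel, leaving `λ(nℓ) log n`. In the ordinary commutator
they cancel only when `λ(n) = 1`; when `λ(n) = -1` they add up to `±(log n + 2 log ℓ)`. -/

theorem pow_cardFactors_mul {M : Type*} [Monoid M] (x : M) {m n : ℕ} (hm : m ≠ 0) (hn : n ≠ 0) :
    x ^ Ω (m * n) = x ^ Ω m * x ^ Ω n := by
  rw [cardFactors_mul hm hn, pow_add]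

theorem neg_one_pow_cardFactors_mul_log_mul_sub {n ℓ : ℕ} (hn : n ≠ 0) (hℓ : ℓ ≠ 0) :
    (-1 : ℝ) ^ Ω (n * ℓ) * Real.log ((n : ℝ) * ℓ) -
        (-1 : ℝ) ^ Ω n * (-1 : ℝ) ^ Ω ℓ * Real.log (ℓ : ℝ) =
      (-1 : ℝ) ^ Ω (n * ℓ) * Real.log (n : ℝ) := by
  rw [Real.log_mul (by exact_mod_cast hn) (by exact_mod_cast hℓ), pow_cardFactors_mul _ hn hℓ]
  ring

theorem abs_neg_one_pow_cardFactors_mul_log_mul_sub_of_eq_neg_one {n ℓ : ℕ} (hn : n ≠ 0)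
    (hℓ : ℓ ≠ 0) (hneg : (-1 : ℝ) ^ Ω n = -1) :
    |(-1 : ℝ) ^ Ω (n * ℓ) * Real.log ((n : ℝ) * ℓ) - (-1 : ℝ) ^ Ω ℓ * Real.log (ℓ : ℝ)| =
      Real.log n + 2 * Real.log ℓ := by
  have hsplit :
      (-1 : ℝ) ^ Ω (n * ℓ) * Real.log ((n : ℝ) * ℓ) - (-1 : ℝ) ^ Ω ℓ * Real.log (ℓ : ℝ) =
      -(-1 : ℝ) ^ Ω ℓ * (Real.log n + 2 * Real.log ℓ) := by
    rw [Real.log_mul (by exact_mod_cast hn) (by exact_mod_cast hℓ), pow_cardFactors_mul _ hn hℓ,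
      hneg]
    ring
  rw [hsplit, abs_mul, abs_neg, abs_neg_one_pow, one_mul, abs_of_nonneg]
  exact add_nonneg (Real.log_natCast_nonneg n) (mul_nonneg zero_le_two (Real.log_natCast_nonneg ℓ))

theorem exists_one_le_lt_log_natCast (C : ℝ) : ∃ ℓ : ℕ, 1 ≤ ℓ ∧ C < Real.log ℓ :=
  ((eventually_ge_atTop 1).and
    ((Real.tendsto_log_atTop.comp tendsto_natCast_atTop_atTop).eventually_gt_atTop C)).exists

/-- (a) For `λ(n) = (-1)^Ω(n)` and `ℓ ≥ 1`:
`λ(nℓ) log(nℓ) − λ(n)λ(ℓ) log ℓ = λ(nℓ) log n`, whose absolute value is `≤ log n`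
(boundedness of the twisted commutator of the Bost–Connes σ-spectral triple).
(b) If `λ(n) = −1` then the quantities `|λ(nℓ) log(nℓ) − λ(ℓ) log ℓ|` are unbounded
in `ℓ` (unboundedness of the ordinary commutator `[D, μ_n]`). -/
theorem bostConnes_twisted_commutator (n : ℕ) (hn : 1 ≤ n) :
    (∀ ℓ : ℕ, 1 ≤ ℓ →
      ((-1 : ℝ) ^ (cardFactors (n * ℓ)) * Real.log ((n : ℝ) * ℓ) -
          (-1 : ℝ) ^ (cardFactors n) * (-1 : ℝ) ^ (cardFactors ℓ) * Real.log (ℓ : ℝ) =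
        (-1 : ℝ) ^ (cardFactors (n * ℓ)) * Real.log (n : ℝ)) ∧
      |(-1 : ℝ) ^ (cardFactors (n * ℓ)) * Real.log ((n : ℝ) * ℓ) -
          (-1 : ℝ) ^ (cardFactors n) * (-1 : ℝ) ^ (cardFactors ℓ) * Real.log (ℓ : ℝ)| ≤
        Real.log (n : ℝ)) ∧
    (((-1 : ℝ) ^ (cardFactors n) = -1) → ∀ C : ℝ, ∃ ℓ : ℕ, 1 ≤ ℓ ∧
      |(-1 : ℝ) ^ (cardFactors (n * ℓ)) * Real.log ((n : ℝ) * ℓ) -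
          (-1 : ℝ) ^ (cardFactors ℓ) * Real.log (ℓ : ℝ)| > C) := by
  have hn0 : n ≠ 0 := Nat.one_le_iff_ne_zero.mp hn
  refine ⟨fun ℓ hℓ => ?_, fun hneg C => ?_⟩
  · have htwisted := neg_one_pow_cardFactors_mul_log_mul_sub hn0 (Nat.one_le_iff_ne_zero.mp hℓ)
    refine ⟨htwisted, ?_⟩
    rw [htwisted, abs_mul, abs_neg_one_pow, one_mul, abs_of_nonneg (Real.log_natCast_nonneg n)]
  · obtain ⟨ℓ, hℓ, hCℓ⟩ := exists_one_le_lt_log_natCast C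
    refine ⟨ℓ, hℓ, ?_⟩
    rw [abs_neg_one_pow_cardFactors_mul_log_mul_sub_of_eq_neg_one hn0
      (Nat.one_le_iff_ne_zero.mp hℓ) hneg]
    linarith [Real.log_natCast_nonneg n, Real.log_natCast_nonneg ℓ]
end

section
/- Let n and ℓ be coprime squarefree positive integers. Then μ(nℓ)·log(nℓ) − μ(n)·μ(ℓ)·log(ℓ) = μ(n)·μ(ℓ)·log(n); in particular its absolute value equals log(n), so the matrix entries of the twisted commutator D·μ̃_n − σ(μ̃_n)·D of the Riemann-gas σ-spectral triple are bounded. Moreover, if n is squarefree with μ(n) = −1, then for every C there exists a squarefree positive integer ℓ coprime to n with log(nℓ) − μ(n)·log(ℓ) = log(n) + 2·log(ℓ) > C; that is, the matrix entries of |D|·μ̃_n − σ(μ̃_n)·|D| are unbounded, so Lipschitz regularity fails. -/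
/-! Since μ is multiplicative and log(nℓ) = log n + log ℓ, the twisted difference collapses to
μ(n)μ(ℓ) log n, of absolute value log n. With |D| in place of D the sign of μ(n) = −1 no longer
cancels, leaving log n + 2 log ℓ, which is unbounded as ℓ runs through the primes above n. -/

open ArithmeticFunction

theorem moebius_mul_log_mul_sub_eq {n ℓ : ℕ} (hn : n ≠ 0) (hℓ : ℓ ≠ 0) (hco : n.Coprime ℓ) :
    (moebius (n * ℓ) : ℝ) * Real.log ((n : ℝ) * ℓ) -
        (moebius n : ℝ) * (moebius ℓ : ℝ) * Real.log ℓ =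
      (moebius n : ℝ) * (moebius ℓ : ℝ) * Real.log n := by
  have hmul : (moebius (n * ℓ) : ℝ) = (moebius n : ℝ) * (moebius ℓ : ℝ) := by
    exact_mod_cast isMultiplicative_moebius.map_mul_of_coprime hco
  rw [hmul, Real.log_mul (by exact_mod_cast hn) (by exact_mod_cast hℓ)]
  ring

theorem abs_moebius_mul_moebius_mul_log {n ℓ : ℕ} (hn : Squarefree n) (hℓ : Squarefree ℓ) :
    |(moebius n : ℝ) * (moebius ℓ : ℝ) * Real.log n| = Real.log n := by
  have hμ {m : ℕ} (hm : Squarefree m) : |(moebius m : ℝ)| = 1 := by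
    exact_mod_cast abs_moebius_eq_one_of_squarefree hm
  rw [abs_mul, abs_mul, hμ hn, hμ hℓ, one_mul, one_mul,
    abs_of_nonneg (Real.log_natCast_nonneg n)]

theorem log_mul_sub_moebius_mul_log_of_moebius_eq_neg_one {n ℓ : ℕ} (hn : n ≠ 0)
    (hℓ : ℓ ≠ 0) (hμ : moebius n = -1) :
    Real.log ((n : ℝ) * ℓ) - (moebius n : ℝ) * Real.log ℓ = Real.log n + 2 * Real.log ℓ := by
  rw [Real.log_mul (by exact_mod_cast hn) (by exact_mod_cast hℓ), hμ]
  push_cast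
  ring

theorem exists_prime_gt_and_lt_log (n : ℕ) (C : ℝ) :
    ∃ p : ℕ, p.Prime ∧ n < p ∧ C < Real.log p := by
  obtain ⟨p, hle, hp⟩ := Nat.exists_infinite_primes (max n ⌈Real.exp C⌉₊ + 1)
  refine ⟨p, hp, by omega, ?_⟩
  rw [Real.lt_log_iff_exp_lt (by exact_mod_cast hp.pos)]
  calc Real.exp C ≤ ⌈Real.exp C⌉₊ := Nat.le_ceil _
    _ < p := by exact_mod_cast (by omega : ⌈Real.exp C⌉₊ < p)

/-- For coprime squarefree positive `n, ℓ`: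
`μ(nℓ) log(nℓ) − μ(n)μ(ℓ) log ℓ = μ(n)μ(ℓ) log n`, with absolute value `log n`
(boundedness of the twisted commutator of the Riemann-gas σ-spectral triple).
Moreover, if `n` is squarefree with `μ(n) = −1`, the quantities
`log(nℓ) − μ(n) log ℓ = log n + 2 log ℓ` are unbounded over squarefree `ℓ` coprime
to `n`, so Lipschitz regularity fails. -/
theorem riemannGas_twisted_commutator :
    (∀ n ℓ : ℕ, 0 < n → 0 < ℓ → Squarefree n → Squarefree ℓ → Nat.Coprime n ℓ →
      ((moebius (n * ℓ) : ℝ) * Real.log ((n : ℝ) * ℓ) -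
          (moebius n : ℝ) * (moebius ℓ : ℝ) * Real.log (ℓ : ℝ) =
        (moebius n : ℝ) * (moebius ℓ : ℝ) * Real.log (n : ℝ)) ∧
      |(moebius (n * ℓ) : ℝ) * Real.log ((n : ℝ) * ℓ) -
          (moebius n : ℝ) * (moebius ℓ : ℝ) * Real.log (ℓ : ℝ)| = Real.log (n : ℝ)) ∧
    (∀ n : ℕ, 0 < n → Squarefree n → moebius n = -1 → ∀ C : ℝ,
      ∃ ℓ : ℕ, 0 < ℓ ∧ Squarefree ℓ ∧ Nat.Coprime n ℓ ∧
        Real.log ((n : ℝ) * ℓ) - (moebius n : ℝ) * Real.log (ℓ : ℝ) =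
          Real.log (n : ℝ) + 2 * Real.log (ℓ : ℝ) ∧
        Real.log (n : ℝ) + 2 * Real.log (ℓ : ℝ) > C) := by
  refine ⟨fun n ℓ hn hℓ hsn hsℓ hco => ?_, fun n hn _ hμ C => ?_⟩
  · have key := moebius_mul_log_mul_sub_eq hn.ne' hℓ.ne' hco
    exact ⟨key, key ▸ abs_moebius_mul_moebius_mul_log hsn hsℓ⟩
  · obtain ⟨p, hp, hnp, hCp⟩ := exists_prime_gt_and_lt_log n C
    have hlogn := Real.log_natCast_nonneg n
    have hlogp : 0 ≤ Real.log p := Real.log_natCast_nonneg p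
    refine ⟨p, hp.pos, hp.prime.squarefree, (Nat.coprime_of_lt_prime hn.ne' hnp hp).symm,
      log_mul_sub_moebius_mul_log_of_moebius_eq_neg_one hn.ne' hp.ne_zero hμ, by linarith⟩
end
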